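/- Along solutions of z' = w, w' = −i s K w + μ z with ⟨z̄,z⟩ = 1, the matrix Φ = (1/2)(w z* − z w*) + (i s/4)(K z z* + z z* K) satisfies Φ' = (i s/2)[Φ, K] + (s²/8)[z z*, K²]. -/
import Mathlib


/-- The rank-one matrix `z z*` with entries `zᵢ conj(zⱼ)`. -/
noncomputable def zzStar {ℓ : ℕ} (z : Fin ℓ → ℂ) : Matrix (Fin ℓ) (Fin ℓ) ℂ :=
  Matrix.of fun i j => z i * (starRingEnd ℂ) (z j)

/-- `Φ_0 = (1/2)(w z* − z w*)`. -/
noncomputable def phiZero {ℓ : ℕ} (z w : Fin ℓ → ℂ) : Matrix (Fin ℓ) (Fin ℓ) ℂ :=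
  Matrix.of fun i j => (1 / 2 : ℂ) *
    (w i * (starRingEnd ℂ) (z j) - z i * (starRingEnd ℂ) (w j))

/-- The complex magnetic momentum map
`Φ = (1/2)(w z* − z w*) + (i s/4)(K z z* + z z* K)`. -/
noncomputable def phiU {ℓ : ℕ} (s : ℝ) (K : Fin ℓ → ℝ) (z w : Fin ℓ → ℂ) :
    Matrix (Fin ℓ) (Fin ℓ) ℂ :=
  phiZero z w + (Complex.I * s / 4) •
    (Matrix.diagonal (fun i => (K i : ℂ)) * zzStar z
      + zzStar z * Matrix.diagonal (fun i => (K i : ℂ)))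

/-- along solutions of `z' = w`, `w' = −isKw + μz` on the
constraint set, `Φ' = (is/2)[Φ, K] + (s²/8)[zz*, K²]`. -/
theorem magnetic_momentum_full_derivative_complex
    (ℓ : ℕ) (z w : ℝ → Fin ℓ → ℂ) (K : Fin ℓ → ℝ) (s : ℝ) (μ : ℝ → ℝ)
    (hz : ∀ i t, HasDerivAt (fun τ => z τ i) (w t i) t)
    (hw : ∀ i t, HasDerivAt (fun τ => w τ i)
      (-(Complex.I * s * K i * w t i) + μ t * z t i) t)
    (hnorm : ∀ t, ∑ i, Complex.normSq (z t i) = 1)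
    (hperp : ∀ t, ∑ i, (w t i * (starRingEnd ℂ) (z t i)
      + (starRingEnd ℂ) (w t i) * z t i) = 0) :
    ∀ i j t, HasDerivAt (fun τ => phiU s K (z τ) (w τ) i j)
      (((Complex.I * s / 2) •
          (phiU s K (z t) (w t) * Matrix.diagonal (fun i => (K i : ℂ))
            - Matrix.diagonal (fun i => (K i : ℂ)) * phiU s K (z t) (w t))
        + ((s ^ 2 / 8 : ℝ) : ℂ) •
          (zzStar (z t) * (Matrix.diagonal (fun i => (K i : ℂ))) ^ 2
            - (Matrix.diagonal (fun i => (K i : ℂ))) ^ 2 * zzStar (z t))) i j) t := by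
  intro i j t
  have hzc : ∀ k, HasDerivAt (fun τ => (starRingEnd ℂ) (z τ k))
      ((starRingEnd ℂ) (w t k)) t := fun k => (hz k t).star
  have hwc : ∀ k, HasDerivAt (fun τ => (starRingEnd ℂ) (w τ k))
      ((starRingEnd ℂ) (-(Complex.I * s * K k * w t k) + μ t * z t k)) t :=
    fun k => (hw k t).star
  have h1 : HasDerivAt (fun τ => (1 / 2 : ℂ) *
      (w τ i * (starRingEnd ℂ) (z τ j) - z τ i * (starRingEnd ℂ) (w τ j))
      + (Complex.I * s / 4) * (((K i : ℂ) + K j) * (z τ i * (starRingEnd ℂ) (z τ j))))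
      ((1 / 2 : ℂ) *
        (((-(Complex.I * s * K i * w t i) + μ t * z t i) * (starRingEnd ℂ) (z t j)
            + w t i * (starRingEnd ℂ) (w t j))
          - (w t i * (starRingEnd ℂ) (w t j)
            + z t i * (starRingEnd ℂ) (-(Complex.I * s * K j * w t j) + μ t * z t j)))
        + (Complex.I * s / 4) * (((K i : ℂ) + K j) *
          (w t i * (starRingEnd ℂ) (z t j) + z t i * (starRingEnd ℂ) (w t j)))) t := by
    exact ((((hw i t).mul (hzc j)).sub ((hz i t).mul (hwc j))).const_mul _).add
      ((((hz i t).mul (hzc j)).const_mul _).const_mul _)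
  convert h1 using 1
  · funext τ
    simp [phiU, phiZero, zzStar, Matrix.mul_diagonal, Matrix.diagonal_mul,
      Matrix.add_apply, Matrix.smul_apply, smul_eq_mul]
    ring
  · simp only [map_add, map_neg, map_mul, Complex.conj_I, Complex.conj_ofReal,
      Matrix.add_apply, Matrix.smul_apply, Matrix.sub_apply, Matrix.mul_diagonal,
      Matrix.diagonal_mul, smul_eq_mul, phiU, phiZero, zzStar, Matrix.of_apply,
      pow_two, Matrix.diagonal_mul_diagonal]
    have hI : Complex.I * Complex.I = -1 := Complex.I_mul_I
    push_cast
    ring_nf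
    linear_combination (s^2 / 8 * (K j)^2 - s^2/8 * (K i)^2) * z t i *
      (starRingEnd ℂ) (z t j) * hI
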